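/- (Example: modified Nyström recovers the best rank-1 approximation.) Let K be the 3×3 symmetric matrix with rows (1, 0, 10), (0, 1.01, 0), (10, 0, 100), let C be the 3×2 matrix consisting of the first two columns of K, and let W = diag(1, 1.01). Then the matrix G with rows (1, 0, 10), (0, 0, 0), (10, 0, 100) is a best rank-1 approximation of CW⁻¹Cᵀ in the Frobenius norm, and G is also a best rank-1 approximation of K itself in the Frobenius norm, with ‖K − G‖_F = 1.01. -/

import Mathlib

open Matrix

/-- Frobenius norm of a real matrix: ‖A‖_F = sqrt(trace(Aᵀ A)). -/
noncomputable def frobNorm {α β : Type*} [Fintype α] [Fintype β] (A : Matrix α β ℝ) : ℝ :=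
  Real.sqrt (Matrix.trace (Aᵀ * A))

/-- The 3×3 kernel matrix of the example. -/
def K12 : Matrix (Fin 3) (Fin 3) ℝ :=
  !![1, 0, 10;
     0, 1.01, 0;
     10, 0, 100]

/-- The first two columns of K. -/
def C12 : Matrix (Fin 3) (Fin 2) ℝ :=
  !![1, 0;
     0, 1.01;
     10, 0]

/-- W = diag(1, 1.01). -/
def W12 : Matrix (Fin 2) (Fin 2) ℝ := !![1, 0; 0, 1.01]

/-- The output of the modified Nyström method on this example. -/
def G12 : Matrix (Fin 3) (Fin 3) ℝ :=
  !![1, 0, 10;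
     0, 0, 0;
     10, 0, 100]

/-!
`K12 = u uᵀ + diag(0, 1.01, 0)` with `u = (1, 0, 10)`, and `G12 = u uᵀ`; the eigenvalues of `K12`
are `|u|² = 101`, `1.01` and `0`, so `0 ≤ K12 ≤ 101 • 1`. For a rank-one `x yᵀ`,
`‖K12 - x yᵀ‖_F² = ‖K12‖_F² - 2 xᵀ K12 y + |x|²|y|²`, and Cauchy–Schwarz for the form of `K12`
gives `|xᵀ K12 y| ≤ 101 |x| |y|`, hence `‖K12 - x yᵀ‖_F² ≥ ‖K12‖_F² - 101² = 1.01² = ‖K12 - G12‖_F²`.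
Since `W12⁻¹ = diag(1, 1/1.01)`, `C12 W12⁻¹ C12ᵀ = K12`, so both optimality claims are the same.
-/

namespace Matrix

variable {m n : Type*} [Fintype m] [Fintype n]

omit [Fintype m] in
theorem exists_eq_vecMulVec_of_rank_le_one {K : Type*} [Field K] [DecidableEq n]
    {A : Matrix m n K} (h : A.rank ≤ 1) : ∃ x y, A = vecMulVec x y := by
  obtain ⟨v, hv⟩ := finrank_le_one_iff.mp h
  choose c hc using fun j ↦
    hv ⟨A.col j, by simpa using A.mulVecLin.mem_range_self (Pi.single j 1)⟩
  refine ⟨v, c, ext fun i j ↦ ?_⟩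
  have hcol := congr_fun (congrArg Subtype.val (hc j)) i
  simp only [SetLike.val_smul, Pi.smul_apply, smul_eq_mul] at hcol
  rw [vecMulVec_apply, mul_comm, hcol, col_apply]

theorem PosSemidef.sq_dotProduct_mulVec_le {A : Matrix n n ℝ} (hA : A.PosSemidef) (x y : n → ℝ) :
    (x ⬝ᵥ A *ᵥ y) ^ 2 ≤ (x ⬝ᵥ A *ᵥ x) * (y ⬝ᵥ A *ᵥ y) := by
  let := A.toSeminormedAddCommGroup hA
  let := A.toInnerProductSpace hA
  have hinner (u v : n → ℝ) : inner ℝ u v = u ⬝ᵥ A *ᵥ v := by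
    change (A *ᵥ v) ⬝ᵥ star u = _
    rw [star_trivial, dotProduct_comm]
  have := real_inner_mul_inner_self_le x y
  simp only [hinner] at this
  nlinarith

theorem posSemidef_vecMulVec_self (a : n → ℝ) : (vecMulVec a a).PosSemidef := by
  simpa using posSemidef_vecMulVec_self_star a

theorem PosSemidef.dotProduct_mulVec_self_nonneg {A : Matrix n n ℝ} (hA : A.PosSemidef)
    (x : n → ℝ) : 0 ≤ x ⬝ᵥ A *ᵥ x := by
  simpa using hA.dotProduct_mulVec_nonneg x

theorem dotProduct_mulVec_self_le_of_posSemidef_smul_one_sub [DecidableEq n] {A : Matrix n n ℝ}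
    {σ : ℝ} (hσ : (σ • 1 - A).PosSemidef) (x : n → ℝ) :
    x ⬝ᵥ A *ᵥ x ≤ σ * (x ⬝ᵥ x) := by
  have := hσ.dotProduct_mulVec_self_nonneg x
  rwa [sub_mulVec, dotProduct_sub, smul_mulVec, one_mulVec, dotProduct_smul, smul_eq_mul,
    sub_nonneg] at this

theorem sq_dotProduct_mulVec_le_of_posSemidef [DecidableEq n] {A : Matrix n n ℝ} {σ : ℝ}
    (hA : A.PosSemidef) (hσ : (σ • 1 - A).PosSemidef) (x y : n → ℝ) :
    (x ⬝ᵥ A *ᵥ y) ^ 2 ≤ σ ^ 2 * ((x ⬝ᵥ x) * (y ⬝ᵥ y)) := by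
  calc (x ⬝ᵥ A *ᵥ y) ^ 2 ≤ (x ⬝ᵥ A *ᵥ x) * (y ⬝ᵥ A *ᵥ y) := hA.sq_dotProduct_mulVec_le x y
    _ ≤ (σ * (x ⬝ᵥ x)) * (σ * (y ⬝ᵥ y)) :=
      mul_le_mul (dotProduct_mulVec_self_le_of_posSemidef_smul_one_sub hσ x)
        (dotProduct_mulVec_self_le_of_posSemidef_smul_one_sub hσ y)
        (hA.dotProduct_mulVec_self_nonneg y)
        ((hA.dotProduct_mulVec_self_nonneg x).trans
          (dotProduct_mulVec_self_le_of_posSemidef_smul_one_sub hσ x))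
    _ = σ ^ 2 * ((x ⬝ᵥ x) * (y ⬝ᵥ y)) := by ring

end Matrix

open Matrix

section Frobenius

variable {m n : Type*} [Fintype m] [Fintype n]

theorem frobNorm_nonneg (A : Matrix m n ℝ) : 0 ≤ frobNorm A := Real.sqrt_nonneg _

theorem frobNorm_sq (A : Matrix m n ℝ) : frobNorm A ^ 2 = ∑ i, ∑ j, A i j ^ 2 := by
  have htrace : trace (Aᵀ * A) = ∑ i, ∑ j, A i j ^ 2 := by
    simp only [trace, diag, mul_apply, transpose_apply, sq]
    exact Finset.sum_comm
  rw [frobNorm, Real.sq_sqrt (htrace ▸ by positivity), htrace]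

theorem frobNorm_sub_vecMulVec_sq (A : Matrix m n ℝ) (x : m → ℝ) (y : n → ℝ) :
    frobNorm (A - vecMulVec x y) ^ 2
      = frobNorm A ^ 2 - 2 * (x ⬝ᵥ A *ᵥ y) + (x ⬝ᵥ x) * (y ⬝ᵥ y) := by
  have hbilin : x ⬝ᵥ A *ᵥ y = ∑ i, ∑ j, x i * A i j * y j := by
    simp only [dotProduct, mulVec, Finset.mul_sum, mul_assoc]
  have hnorms : (x ⬝ᵥ x) * (y ⬝ᵥ y) = ∑ i, ∑ j, (x i * y j) ^ 2 := by
    simp only [dotProduct, Finset.sum_mul_sum]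
    exact Finset.sum_congr rfl fun i _ ↦ Finset.sum_congr rfl fun j _ ↦ by ring
  simp only [frobNorm_sq, hbilin, hnorms, Finset.mul_sum, ← Finset.sum_sub_distrib,
    ← Finset.sum_add_distrib]
  refine Finset.sum_congr rfl fun i _ ↦ Finset.sum_congr rfl fun j _ ↦ ?_
  rw [Matrix.sub_apply, vecMulVec_apply]
  ring

-- The rank-one Eckart–Young bound: with `q = |x|²|y|²`, `(q + σ²)² - 4 (xᵀAy)² ≥ (q - σ²)² ≥ 0`.
theorem frobNorm_sq_sub_le_frobNorm_sub_vecMulVec_sq {A : Matrix m n ℝ} {σ : ℝ}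
    {x : m → ℝ} {y : n → ℝ} (h : (x ⬝ᵥ A *ᵥ y) ^ 2 ≤ σ ^ 2 * ((x ⬝ᵥ x) * (y ⬝ᵥ y))) :
    frobNorm A ^ 2 - σ ^ 2 ≤ frobNorm (A - vecMulVec x y) ^ 2 := by
  have hq : 0 ≤ (x ⬝ᵥ x) * (y ⬝ᵥ y) :=
    mul_nonneg (dotProduct_self_star_nonneg x) (dotProduct_self_star_nonneg y)
  rw [frobNorm_sub_vecMulVec_sq]
  nlinarith [sq_nonneg ((x ⬝ᵥ x) * (y ⬝ᵥ y) - σ ^ 2)]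

end Frobenius

theorem G12_eq_vecMulVec : G12 = vecMulVec ![1, 0, 10] ![1, 0, 10] := by
  ext i j
  fin_cases i <;> fin_cases j <;> norm_num [G12, vecMulVec_apply]

theorem K12_sub_G12 : K12 - G12 = diagonal ![0, 1.01, 0] := by
  ext i j
  fin_cases i <;> fin_cases j <;> norm_num [K12, G12]

theorem smul_one_sub_K12 :
    (101 : ℝ) • 1 - K12 = vecMulVec ![10, 0, -1] ![10, 0, -1] + diagonal ![0, 99.99, 0] := by
  ext i j
  fin_cases i <;> fin_cases j <;> norm_num [K12, vecMulVec_apply]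

theorem K12_posSemidef : K12.PosSemidef := by
  rw [← sub_add_cancel K12 G12, K12_sub_G12, G12_eq_vecMulVec]
  exact (PosSemidef.diagonal (by intro i; fin_cases i <;> norm_num)).add
    (posSemidef_vecMulVec_self _)

theorem smul_one_sub_K12_posSemidef : ((101 : ℝ) • 1 - K12).PosSemidef := by
  rw [smul_one_sub_K12]
  exact (posSemidef_vecMulVec_self _).add
    (PosSemidef.diagonal (by intro i; fin_cases i <;> norm_num))

theorem frobNorm_K12_sq : frobNorm K12 ^ 2 = 101 ^ 2 + 1.01 ^ 2 := by
  rw [frobNorm_sq]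
  simp only [K12, of_apply, cons_val', cons_val_fin_one, Fin.sum_univ_three, cons_val_zero,
    cons_val_one, cons_val]
  norm_num

theorem frobNorm_K12_sub_G12 : frobNorm (K12 - G12) = 1.01 := by
  rw [← sq_eq_sq₀ (frobNorm_nonneg _) (by norm_num), frobNorm_sq, K12_sub_G12]
  simp [Fin.sum_univ_three, diagonal]

theorem C12_mul_W12_inv_mul_C12_transpose : C12 * W12⁻¹ * C12ᵀ = K12 := by
  have hW : W12⁻¹ = !![1, 0; 0, 100 / 101] := by
    refine inv_eq_right_inv ?_
    ext i j
    fin_cases i <;> fin_cases j <;> norm_num [W12]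
  rw [hW]
  ext i j
  fin_cases i <;> fin_cases j <;> norm_num [C12, K12, mul_apply, Fin.sum_univ_two]

theorem frobNorm_K12_sub_G12_le {G : Matrix (Fin 3) (Fin 3) ℝ} (hG : G.rank ≤ 1) :
    frobNorm (K12 - G12) ≤ frobNorm (K12 - G) := by
  obtain ⟨x, y, rfl⟩ := exists_eq_vecMulVec_of_rank_le_one hG
  have := frobNorm_sq_sub_le_frobNorm_sub_vecMulVec_sq
    (sq_dotProduct_mulVec_le_of_posSemidef K12_posSemidef smul_one_sub_K12_posSemidef x y)
  rw [frobNorm_K12_sq] at this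
  rw [← pow_le_pow_iff_left₀ (frobNorm_nonneg _) (frobNorm_nonneg _) two_ne_zero,
    frobNorm_K12_sub_G12]
  linarith

/-- The modified Nyström method recovers the best rank-1 approximation of K itself. -/
theorem stmt_12 :
    G12.rank ≤ 1 ∧
    (∀ G' : Matrix (Fin 3) (Fin 3) ℝ, G'.rank ≤ 1 →
      frobNorm (C12 * W12⁻¹ * C12ᵀ - G12) ≤ frobNorm (C12 * W12⁻¹ * C12ᵀ - G')) ∧
    (∀ G' : Matrix (Fin 3) (Fin 3) ℝ, G'.rank ≤ 1 →
      frobNorm (K12 - G12) ≤ frobNorm (K12 - G')) ∧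
    frobNorm (K12 - G12) = 1.01 := by
  rw [C12_mul_W12_inv_mul_C12_transpose]
  exact ⟨G12_eq_vecMulVec ▸ rank_vecMulVec_le _ _, fun _ ↦ frobNorm_K12_sub_G12_le,
    fun _ ↦ frobNorm_K12_sub_G12_le, frobNorm_K12_sub_G12⟩
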